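/- In End(V), set y_0^+ = b*^{−1}B*, y_1^+ = b^{−1}B, y_0^− = a*^{−1}A*, y_1^− = a^{−1}A, k_0 = K, k_0^{−1} = K^{−1}, k_1 = K^{−1}, k_1^{−1} = K. Then these eight operators satisfy the alternate relations, and the only subspaces of V invariant under all eight operators are 0 and V. (In other words, this assignment gives V an irreducible U_q(ŝl_2)-module structure in which the alternate generators act as indicated.) -/

import Mathlib

noncomputable section

open Submodule

variable {K : Type*} [Field K]

/-- `[n]_q = (q^n − q^{−n})/(q − q^{−1})`. -/
def qInt (q : K) (n : ℤ) : K := (q ^ n - q ^ (-n)) / (q - q⁻¹)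

/-- Elements `y₀⁺, y₁⁺, y₀⁻, y₁⁻, k₀, k₀⁻¹, k₁, k₁⁻¹` of a unital associative `K`-algebra
satisfy the alternate relations. -/
structure AlternateRelations (q : K) {A : Type*} [Ring A] [Algebra K A]
    (yp ym k kinv : Fin 2 → A) : Prop where
  k_kinv : ∀ i, k i * kinv i = 1
  kinv_k : ∀ i, kinv i * k i = 1
  central_yp : ∀ i, k 0 * k 1 * yp i = yp i * (k 0 * k 1)
  central_ym : ∀ i, k 0 * k 1 * ym i = ym i * (k 0 * k 1)
  central_k : ∀ i, k 0 * k 1 * k i = k i * (k 0 * k 1)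
  central_kinv : ∀ i, k 0 * k 1 * kinv i = kinv i * (k 0 * k 1)
  rel_yp_k : ∀ i, (q - q⁻¹)⁻¹ • (q • (yp i * k i) - q⁻¹ • (k i * yp i)) = 1
  rel_k_ym : ∀ i, (q - q⁻¹)⁻¹ • (q • (k i * ym i) - q⁻¹ • (ym i * k i)) = 1
  rel_ym_yp : ∀ i, (q - q⁻¹)⁻¹ • (q • (ym i * yp i) - q⁻¹ • (yp i * ym i)) = 1
  rel_yp_ym : ∀ i j, i ≠ j →
    (q - q⁻¹)⁻¹ • (q • (yp i * ym j) - q⁻¹ • (ym j * yp i)) = kinv 0 * kinv 1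
  serre_p : ∀ i j, i ≠ j →
    yp i ^ 3 * yp j - qInt q 3 • (yp i ^ 2 * yp j * yp i)
      + qInt q 3 • (yp i * yp j * yp i ^ 2) - yp j * yp i ^ 3 = 0
  serre_m : ∀ i j, i ≠ j →
    ym i ^ 3 * ym j - qInt q 3 • (ym i ^ 2 * ym j * ym i)
      + qInt q 3 • (ym i * ym j * ym i ^ 2) - ym j * ym i ^ 3 = 0

/-- Elements `e₀⁺, e₁⁺, e₀⁻, e₁⁻, K₀, K₀⁻¹, K₁, K₁⁻¹` of a unital associative `K`-algebra
satisfy the Chevalley relations of `U_q(sl₂ hat)`. -/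
structure ChevalleyRelations (q : K) {A : Type*} [Ring A] [Algebra K A]
    (ep em Kg Kginv : Fin 2 → A) : Prop where
  K_Kinv : ∀ i, Kg i * Kginv i = 1
  Kinv_K : ∀ i, Kginv i * Kg i = 1
  K_comm : Kg 0 * Kg 1 = Kg 1 * Kg 0
  KepK_same : ∀ i, Kg i * ep i * Kginv i = (q ^ (2 : ℤ)) • ep i
  KemK_same : ∀ i, Kg i * em i * Kginv i = (q ^ (-2 : ℤ)) • em i
  KepK_diff : ∀ i j, i ≠ j → Kg i * ep j * Kginv i = (q ^ (-2 : ℤ)) • ep j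
  KemK_diff : ∀ i j, i ≠ j → Kg i * em j * Kginv i = (q ^ (2 : ℤ)) • em j
  e_comm_same : ∀ i, ep i * em i - em i * ep i = (q - q⁻¹)⁻¹ • (Kg i - Kginv i)
  e_comm_diff : ∀ i j, i ≠ j → ep i * em j = em j * ep i
  serre_p : ∀ i j, i ≠ j →
    ep i ^ 3 * ep j - qInt q 3 • (ep i ^ 2 * ep j * ep i)
      + qInt q 3 • (ep i * ep j * ep i ^ 2) - ep j * ep i ^ 3 = 0
  serre_m : ∀ i j, i ≠ j →
    em i ^ 3 * em j - qInt q 3 • (em i ^ 2 * em j * em i)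
      + qInt q 3 • (em i * em j * em i ^ 2) - em j * em i ^ 3 = 0

variable {V : Type*} [AddCommGroup V] [Module K V]

/-- A decomposition of `V` of length `d`: nonzero subspaces `U 0, …, U d`
(indexed by `ℤ`, with `U i = ⊥` outside `[0, d]`) whose direct sum is `V`. -/
structure IsDecomposition (d : ℕ) (U : ℤ → Submodule K V) : Prop where
  bot_of_lt : ∀ i : ℤ, i < 0 → U i = ⊥
  bot_of_gt : ∀ i : ℤ, (d : ℤ) < i → U i = ⊥
  ne_bot : ∀ i : ℤ, 0 ≤ i → i ≤ (d : ℤ) → U i ≠ ⊥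
  indep : iSupIndep U
  sup_eq_top : ⨆ i, U i = ⊤

/-- `A, A*` is a tridiagonal pair on `V` with standard orderings `Vs 0, …, Vs d` and
`Vs' 0, …, Vs' d` of the eigenspaces of `A` resp. `A*`, with corresponding eigenvalues
`θ i` resp. `θ' i`. -/
structure IsTridiagonalPair (A A' : Module.End K V) (d : ℕ)
    (Vs Vs' : ℤ → Submodule K V) (θ θ' : ℤ → K) : Prop where
  decompV : IsDecomposition d Vs
  decompV' : IsDecomposition d Vs'
  eig : ∀ i : ℤ, ∀ v ∈ Vs i, A v = θ i • v
  eig' : ∀ i : ℤ, ∀ v ∈ Vs' i, A' v = θ' i • v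
  theta_inj : ∀ i j : ℤ, 0 ≤ i → i ≤ (d : ℤ) → 0 ≤ j → j ≤ (d : ℤ) → θ i = θ j → i = j
  theta'_inj : ∀ i j : ℤ, 0 ≤ i → i ≤ (d : ℤ) → 0 ≤ j → j ≤ (d : ℤ) → θ' i = θ' j → i = j
  trid : ∀ i : ℤ, (Vs i).map A' ≤ Vs (i - 1) ⊔ Vs i ⊔ Vs (i + 1)
  trid' : ∀ i : ℤ, (Vs' i).map A ≤ Vs' (i - 1) ⊔ Vs' i ⊔ Vs' (i + 1)
  irred : ∀ W : Submodule K V, W.map A ≤ W → W.map A' ≤ W → W = ⊥ ∨ W = ⊤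

/-- The sum `U m + U (m+1) + ⋯ + U n`. -/
def sumIcc (U : ℤ → Submodule K V) (m n : ℤ) : Submodule K V :=
  ⨆ j ∈ Set.Icc m n, U j

/-- Decomposition `[0D]`: the `i`-th subspace is `V_i`. -/
def dec0D (Vs : ℤ → Submodule K V) : ℤ → Submodule K V := Vs

/-- Decomposition `[0*D*]`: the `i`-th subspace is `V*_i`. -/
def dec0sDs (Vs' : ℤ → Submodule K V) : ℤ → Submodule K V := Vs'

/-- Decomposition `[0*D]`: the `i`-th subspace is `(V*_0+⋯+V*_i) ∩ (V_i+⋯+V_d)`. -/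
def dec0sD (d : ℕ) (Vs Vs' : ℤ → Submodule K V) (i : ℤ) : Submodule K V :=
  sumIcc Vs' 0 i ⊓ sumIcc Vs i (d : ℤ)

/-- Decomposition `[0*0]`: the `i`-th subspace is `(V*_0+⋯+V*_i) ∩ (V_0+⋯+V_{d−i})`. -/
def dec0s0 (d : ℕ) (Vs Vs' : ℤ → Submodule K V) (i : ℤ) : Submodule K V :=
  sumIcc Vs' 0 i ⊓ sumIcc Vs 0 ((d : ℤ) - i)

/-- Decomposition `[D*0]`: the `i`-th subspace is `(V*_{d−i}+⋯+V*_d) ∩ (V_0+⋯+V_{d−i})`. -/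
def decDs0 (d : ℕ) (Vs Vs' : ℤ → Submodule K V) (i : ℤ) : Submodule K V :=
  sumIcc Vs' ((d : ℤ) - i) (d : ℤ) ⊓ sumIcc Vs 0 ((d : ℤ) - i)

/-- Decomposition `[D*D]`: the `i`-th subspace is `(V*_{d−i}+⋯+V*_d) ∩ (V_i+⋯+V_d)`. -/
def decDsD (d : ℕ) (Vs Vs' : ℤ → Submodule K V) (i : ℤ) : Submodule K V :=
  sumIcc Vs' ((d : ℤ) - i) (d : ℤ) ⊓ sumIcc Vs i (d : ℤ)


/-! After dividing `A, A*, B, B*` by `a, a*, b, b*`, all eigenvalues are powers of `q`.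
Everything is read off three split decompositions `[0*D]`, `[0*0]`, `[D*D]` of the
tridiagonal pair (the latter two being `[0*D]` for a reversed ordering): on each, `A − θ`
raises and `A* − θ*` lowers the index by one, irreducibility ruling out anything else.
If `P` acts on the `i`-th block as `ξ i` and `Q − (ξ i)⁻¹` moves it to a block where `P`
acts as `q⁻² ξ i`, then `q P Q − q⁻¹ Q P = q − q⁻¹` block by block; this gives six of the
eight `q`-Weyl relations. Read backwards, such a relation with `Q = A*` (or `A`) forces `P`
to shift the eigenspaces of `Q` by at most one step, since the eigenvalues of `A*` are
pairwise distinct. This makes `K` shift `[D*D]` and `K⁻¹` shift `[0*0]`, giving the last two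
relations, and makes `B*` tridiagonal on `[0*0]`, `B` on `[D*D]`. A diagonal operator and an
operator tridiagonal in its eigenbasis, with consecutive eigenvalues in ratio `q^{±2}`,
satisfy the `q`-Serre relation since `(t − s)(t − q²s)(t − q⁻²s)` kills each block. -/

section QArith
variable {q : K}

lemma zpow_injective_of_pow_ne_one (hq0 : q ≠ 0) (hq : ∀ n : ℕ, 0 < n → q ^ n ≠ 1) :
    Function.Injective (q ^ · : ℤ → K) := by
  have hu : ¬IsOfFinOrder (Units.mk0 q hq0) := fun h => by
    obtain ⟨n, hn, hn1⟩ := isOfFinOrder_iff_pow_eq_one.1 h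
    exact hq n hn (by simpa [Units.ext_iff] using hn1)
  intro m n hmn
  exact injective_zpow_iff_not_isOfFinOrder.2 hu (Units.ext (by simpa using hmn))

lemma sub_inv_ne_zero_of_zpow_injective (hq : Function.Injective (q ^ · : ℤ → K)) :
    q - q⁻¹ ≠ 0 := fun h => by
  have : (1 : ℤ) = -1 := hq (by simpa [zpow_neg_one, sub_eq_zero] using h)
  omega

lemma zpow_eq_sq_mul_zpow (hq0 : q ≠ 0) {m n : ℤ} (h : m = n + 2) : q ^ m = q ^ 2 * q ^ n := by
  rw [h, zpow_add₀ hq0, mul_comm]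
  norm_cast

lemma zpow_mul_zpow_eq_one (hq0 : q ≠ 0) {m n : ℤ} (h : m + n = 0) : q ^ m * q ^ n = 1 := by
  rw [← zpow_add₀ hq0, h, zpow_zero]

lemma qInt_three (hq0 : q ≠ 0) (hqq : q - q⁻¹ ≠ 0) : qInt q 3 = q ^ 2 + 1 + q⁻¹ ^ 2 := by
  rw [qInt, div_eq_iff hqq, zpow_neg, zpow_ofNat]
  field_simp
  ring

lemma eq_add_two_of_zpow_eq (hq0 : q ≠ 0) (hq : Function.Injective (q ^ · : ℤ → K)) {m n : ℤ}
    (h : q ^ m = q ^ 2 * q ^ n) : m = n + 2 :=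
  hq (h.trans (zpow_eq_sq_mul_zpow hq0 rfl).symm)

lemma eq_sub_two_of_zpow_eq (hq0 : q ≠ 0) (hq : Function.Injective (q ^ · : ℤ → K)) {m n : ℤ}
    (h : q ^ m = q⁻¹ ^ 2 * q ^ n) : m = n - 2 := by
  refine hq (h.trans ?_)
  rw [zpow_eq_sq_mul_zpow hq0 (show n = n - 2 + 2 by ring), inv_pow,
    inv_mul_cancel_left₀ (pow_ne_zero 2 hq0)]

/-- `t³ − [3] s t² + [3] s² t − s³ = (t − s)(t − q²s)(t − q⁻²s)`. -/
lemma serre_cubic_eq_zero (hq0 : q ≠ 0) (hqq : q - q⁻¹ ≠ 0) {s t : K}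
    (hst : t = s ∨ t = q ^ 2 * s ∨ s = q ^ 2 * t) :
    t ^ 3 - qInt q 3 * s * t ^ 2 + qInt q 3 * s ^ 2 * t - s ^ 3 = 0 := by
  rw [qInt_three hq0 hqq]
  rcases hst with rfl | rfl | rfl
  · ring
  all_goals field_simp; ring

end QArith

section IntervalSums

lemma le_sumIcc (U : ℤ → Submodule K V) {m n j : ℤ} (h₁ : m ≤ j) (h₂ : j ≤ n) :
    U j ≤ sumIcc U m n :=
  le_biSup U (Set.mem_Icc.2 ⟨h₁, h₂⟩)

lemma sumIcc_le {U : ℤ → Submodule K V} {m n : ℤ} {W : Submodule K V}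
    (h : ∀ j, m ≤ j → j ≤ n → U j ≤ W) : sumIcc U m n ≤ W :=
  iSup₂_le fun j hj => h j hj.1 hj.2

lemma sumIcc_mono (U : ℤ → Submodule K V) {m n m' n' : ℤ} (hm : m' ≤ m) (hn : n ≤ n') :
    sumIcc U m n ≤ sumIcc U m' n' :=
  sumIcc_le fun _ h₁ h₂ => le_sumIcc U (hm.trans h₁) (h₂.trans hn)

lemma sumIcc_eq_bot (U : ℤ → Submodule K V) {m n : ℤ} (h : n < m) : sumIcc U m n = ⊥ :=
  le_bot_iff.1 <| sumIcc_le fun _ _ _ => by omega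

lemma sumIcc_self (U : ℤ → Submodule K V) (m : ℤ) : sumIcc U m m = U m := by
  simp [sumIcc]

lemma sumIcc_le_sup (U : ℤ → Submodule K V) (m p n : ℤ) :
    sumIcc U m n ≤ sumIcc U m p ⊔ sumIcc U (p + 1) n :=
  sumIcc_le fun j h₁ h₂ => by
    rcases le_or_gt j p with h | h
    · exact le_sup_of_le_left (le_sumIcc U h₁ h)
    · exact le_sup_of_le_right (le_sumIcc U (by omega) h₂)

lemma sumIcc_reflect (U : ℤ → Submodule K V) (c m n : ℤ) :
    sumIcc (fun i => U (c - i)) m n = sumIcc U (c - n) (c - m) := by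
  refine le_antisymm (sumIcc_le fun j _ _ => le_sumIcc U (by omega) (by omega))
    (sumIcc_le fun j _ _ => ?_)
  simpa using le_sumIcc (fun i => U (c - i)) (j := c - j) (by omega) (by omega)

lemma sumIcc_eq_iSup {U : ℤ → Submodule K V} {m n : ℤ} (hU : ∀ j, (j < m ∨ n < j) → U j = ⊥) :
    sumIcc U m n = ⨆ j, U j :=
  le_antisymm (iSup₂_le fun j _ => le_iSup U j) <| iSup_le fun j => by
    by_cases hj : m ≤ j ∧ j ≤ n
    · exact le_sumIcc U hj.1 hj.2
    · simp [hU j (by omega)]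

lemma apply_mem_sumIcc {U : ℤ → Submodule K V} {P : Module.End K V} {m n : ℤ}
    {W : Submodule K V} (h : ∀ j, m ≤ j → j ≤ n → ∀ x ∈ U j, P x ∈ W) {v : V}
    (hv : v ∈ sumIcc U m n) : P v ∈ W :=
  (sumIcc_le (W := W.comap P) fun j h₁ h₂ x hx => h j h₁ h₂ x hx) hv

end IntervalSums

section Eigen

variable {ι : Type*}

lemma LinearMap.ext_of_iSup_eq_top {W : Type*} [AddCommGroup W] [Module K W]
    {U : ι → Submodule K V} (hU : ⨆ i, U i = ⊤) {F G : V →ₗ[K] W}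
    (h : ∀ i, ∀ v ∈ U i, F v = G v) : F = G :=
  LinearMap.ext fun v =>
    (iSup_le (a := LinearMap.eqLocus F G) fun i x hx => h i x hx) (hU ▸ Submodule.mem_top (x := v))

lemma apply_mem_biSup_of_eigen {U : ι → Submodule K V} {T : Module.End K V} {θ : ι → K}
    (hT : ∀ i, ∀ v ∈ U i, T v = θ i • v) {S : Set ι} {v : V} (hv : v ∈ ⨆ i ∈ S, U i) :
    T v ∈ ⨆ i ∈ S, U i :=
  (iSup₂_le (a := (⨆ i ∈ S, U i).comap T) fun i hi x hx => by
    rw [Submodule.mem_comap, hT i x hx]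
    exact Submodule.smul_mem _ _ (le_biSup U hi hx)) hv

lemma sub_smul_mem_sumIcc_succ {U : ℤ → Submodule K V} {T : Module.End K V} {θ : ℤ → K}
    (hT : ∀ i, ∀ v ∈ U i, T v = θ i • v) {m n : ℤ} {v : V} (hv : v ∈ sumIcc U m n) :
    T v - θ m • v ∈ sumIcc U (m + 1) n := by
  refine apply_mem_sumIcc (P := T - θ m • 1) (fun j h₁ h₂ x hx => ?_) hv
  obtain rfl | h := h₁.eq_or_lt
  · simp [hT _ x hx]
  · have hx' : x ∈ sumIcc U (m + 1) n := le_sumIcc U h h₂ hx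
    exact sub_mem (apply_mem_biSup_of_eigen hT hx') (Submodule.smul_mem _ _ hx')

lemma sub_smul_mem_sumIcc_pred {U : ℤ → Submodule K V} {T : Module.End K V} {θ : ℤ → K}
    (hT : ∀ i, ∀ v ∈ U i, T v = θ i • v) {m n : ℤ} {v : V} (hv : v ∈ sumIcc U m n) :
    T v - θ n • v ∈ sumIcc U m (n - 1) := by
  refine apply_mem_sumIcc (P := T - θ n • 1) (fun j h₁ h₂ x hx => ?_) hv
  obtain rfl | h := h₂.eq_or_lt
  · simp [hT _ x hx]
  · have hx' : x ∈ sumIcc U m (n - 1) := le_sumIcc U h₁ (by omega) hx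
    exact sub_mem (apply_mem_biSup_of_eigen hT hx') (Submodule.smul_mem _ _ hx')

lemma forall_apply_eq_of_Icc {d : ℕ} {U : ℤ → Submodule K V} {T : Module.End K V} {θ : ℤ → K}
    (hU : ∀ i, (i < 0 ∨ (d : ℤ) < i) → U i = ⊥)
    (hT : ∀ i, 0 ≤ i → i ≤ (d : ℤ) → ∀ v ∈ U i, T v = θ i • v) :
    ∀ i, ∀ v ∈ U i, T v = θ i • v := fun i v hv => by
  by_cases hi : 0 ≤ i ∧ i ≤ (d : ℤ)
  · exact hT i hi.1 hi.2 v hv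
  · rw [hU i (by omega), Submodule.mem_bot] at hv
    simp [hv]

lemma smul_inv_apply_eq {T : Module.End K V} {c x : K} (hc : c ≠ 0) {v : V}
    (h : T v = (c * x) • v) : (c⁻¹ • T) v = x • v := by
  rw [LinearMap.smul_apply, h, smul_smul, inv_mul_cancel_left₀ hc]

lemma apply_eq_inv_smul_of_mul_eq_one {P Q : Module.End K V} (hQP : Q * P = 1) {c : K}
    (hc : c ≠ 0) {v : V} (h : P v = c • v) : Q v = c⁻¹ • v := by
  have hv : c • Q v = v := by
    rw [← map_smul, ← h, ← Module.End.mul_apply, hQP, Module.End.one_apply]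
  rw [← hv, smul_smul, inv_mul_cancel₀ hc, one_smul, hv]

end Eigen

namespace IsDecomposition

variable {d : ℕ} {U : ℤ → Submodule K V}

lemma eq_bot (hU : IsDecomposition d U) {i : ℤ} (hi : i < 0 ∨ (d : ℤ) < i) : U i = ⊥ :=
  hi.elim (hU.bot_of_lt i) (hU.bot_of_gt i)

lemma sumIcc_eq_top (hU : IsDecomposition d U) : sumIcc U 0 d = ⊤ :=
  (sumIcc_eq_iSup fun _ => hU.eq_bot).trans hU.sup_eq_top

lemma sumIcc_of_nonpos (hU : IsDecomposition d U) {m n : ℤ} (hm : m ≤ 0) :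
    sumIcc U m n = sumIcc U 0 n :=
  le_antisymm (sumIcc_le fun j _ h => if hj : 0 ≤ j then le_sumIcc U hj h else by
    simp [hU.eq_bot (Or.inl (not_le.1 hj))]) (sumIcc_mono U hm le_rfl)

lemma sumIcc_of_le (hU : IsDecomposition d U) {m n : ℤ} (hn : (d : ℤ) ≤ n) :
    sumIcc U m n = sumIcc U m d :=
  le_antisymm (sumIcc_le fun j h _ => if hj : j ≤ d then le_sumIcc U h hj else by
    simp [hU.eq_bot (Or.inr (not_le.1 hj))]) (sumIcc_mono U le_rfl hn)

lemma sumIcc_ne_top (hU : IsDecomposition d U) {m n : ℤ} (hm : 0 < m) : sumIcc U m n ≠ ⊤ :=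
  fun h => hU.ne_bot 0 le_rfl (Int.natCast_nonneg d) <| disjoint_top.1 <|
    h ▸ hU.indep.disjoint_biSup (fun h0 => by simp at h0; omega)

lemma reflect (hU : IsDecomposition d U) : IsDecomposition d (fun i => U (d - i)) where
  bot_of_lt i h := hU.bot_of_gt _ (by omega)
  bot_of_gt i h := hU.bot_of_lt _ (by omega)
  ne_bot i h₁ h₂ := hU.ne_bot _ (by omega) (by omega)
  indep := hU.indep.comp (fun i j h => by simpa using h)
  sup_eq_top := by
    rw [← hU.sup_eq_top]
    exact le_antisymm (iSup_le fun i => le_iSup U _)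
      (iSup_le fun i => by simpa using le_iSup (fun j => U (d - j)) (d - i))

/-- Split `w` along `[m, n]` and its complement: the outer part is a `c`-eigenvector of `T`
lying in a sum of eigenspaces for eigenvalues `≠ c`, hence zero. -/
lemma mem_sumIcc_of_sub_smul_mem (hU : IsDecomposition d U) {T : Module.End K V} {θ : ℤ → K}
    (hT : ∀ i, ∀ v ∈ U i, T v = θ i • v) {m n : ℤ} {c : K}
    (hc : ∀ i, 0 ≤ i → i ≤ (d : ℤ) → θ i = c → m ≤ i ∧ i ≤ n) {w : V}
    (hw : T w - c • w ∈ sumIcc U m n) : w ∈ sumIcc U m n := by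
  set W' := ⨆ i ∈ (Set.Icc m n)ᶜ, U i
  have hsup : sumIcc U m n ⊔ W' = ⊤ := by
    rw [sumIcc, ← iSup_union, Set.union_compl_self, iSup_univ, hU.sup_eq_top]
  obtain ⟨w₁, hw₁, w₂, hw₂, rfl⟩ := Submodule.mem_sup.1 (hsup ▸ Submodule.mem_top (x := w))
  have hTw₂ : T w₂ - c • w₂ = 0 := by
    have h : T w₂ - c • w₂ = (T (w₁ + w₂) - c • (w₁ + w₂)) - (T w₁ - c • w₁) := by
      rw [map_add]
      module
    refine Submodule.disjoint_def.1 (hU.indep.disjoint_biSup_biSup disjoint_compl_right) _ ?_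
      (sub_mem (apply_mem_biSup_of_eigen hT hw₂) (Submodule.smul_mem _ _ hw₂))
    rw [h]
    exact sub_mem hw (sub_mem (apply_mem_biSup_of_eigen hT hw₁) (Submodule.smul_mem _ c hw₁))
  have hW' : W' ≤ ⨆ (μ) (_ : μ ≠ c), T.eigenspace μ := iSup₂_le fun i hi => by
    by_cases hd : 0 ≤ i ∧ i ≤ (d : ℤ)
    · exact le_trans (fun x hx => Module.End.mem_eigenspace_iff.2 (hT i x hx))
        (le_iSup₂ (f := fun μ (_ : μ ≠ c) => T.eigenspace μ) (θ i)
          fun h => hi (hc i hd.1 hd.2 h))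
    · simp [hU.eq_bot (i := i) (by omega)]
  have hw₂0 : w₂ = 0 := Submodule.disjoint_def.1 (Module.End.eigenspaces_iSupIndep T c) _
    (Module.End.mem_eigenspace_iff.2 (sub_eq_zero.1 hTw₂)) (hW' hw₂)
  simpa [hw₂0] using hw₁

end IsDecomposition

lemma dec0sD_eq_bot (d : ℕ) (Vs Vs' : ℤ → Submodule K V) {i : ℤ} (hi : i < 0 ∨ (d : ℤ) < i) :
    dec0sD d Vs Vs' i = ⊥ := by
  rcases hi with hi | hi
  · simp [dec0sD, sumIcc_eq_bot Vs' hi]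
  · simp [dec0sD, sumIcc_eq_bot Vs hi]

lemma dec0s0_eq_bot (d : ℕ) (Vs Vs' : ℤ → Submodule K V) {i : ℤ} (hi : i < 0 ∨ (d : ℤ) < i) :
    dec0s0 d Vs Vs' i = ⊥ := by
  rcases hi with hi | hi
  · simp [dec0s0, sumIcc_eq_bot Vs' hi]
  · simp [dec0s0, sumIcc_eq_bot Vs (show (d : ℤ) - i < 0 by omega)]

lemma decDsD_eq_bot (d : ℕ) (Vs Vs' : ℤ → Submodule K V) {i : ℤ} (hi : i < 0 ∨ (d : ℤ) < i) :
    decDsD d Vs Vs' i = ⊥ := by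
  rcases hi with hi | hi
  · simp [decDsD, sumIcc_eq_bot Vs' (show (d : ℤ) < d - i by omega)]
  · simp [decDsD, sumIcc_eq_bot Vs hi]

lemma dec0s0_eq_dec0sD (d : ℕ) (Vs Vs' : ℤ → Submodule K V) :
    dec0s0 d Vs Vs' = dec0sD d (fun i => Vs (d - i)) Vs' := by
  ext1 i
  rw [dec0sD, sumIcc_reflect, sub_self, dec0s0]

lemma decDsD_eq_dec0sD (d : ℕ) (Vs Vs' : ℤ → Submodule K V) :
    decDsD d Vs Vs' = dec0sD d Vs (fun i => Vs' (d - i)) := by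
  ext1 i
  rw [dec0sD, sumIcc_reflect, sub_zero, decDsD]

namespace IsTridiagonalPair

variable {A A' : Module.End K V} {d : ℕ} {Vs Vs' : ℤ → Submodule K V} {θ θ' : ℤ → K}

lemma reverse_fst (h : IsTridiagonalPair A A' d Vs Vs' θ θ') :
    IsTridiagonalPair A A' d (fun i => Vs (d - i)) Vs' (fun i => θ (d - i)) θ' where
  decompV := h.decompV.reflect
  decompV' := h.decompV'
  eig i := h.eig (d - i)
  eig' := h.eig'
  theta_inj i j h₁ h₂ h₃ h₄ hij := by
    have := h.theta_inj _ _ (by omega) (by omega) (by omega) (by omega) hij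
    omega
  theta'_inj := h.theta'_inj
  trid i := by
    have := h.trid (d - i)
    rw [show (d : ℤ) - i - 1 = d - (i + 1) by ring, show (d : ℤ) - i + 1 = d - (i - 1) by ring]
      at this
    simpa only [sup_comm, sup_left_comm] using this
  trid' := h.trid'
  irred := h.irred

lemma reverse_snd (h : IsTridiagonalPair A A' d Vs Vs' θ θ') :
    IsTridiagonalPair A A' d Vs (fun i => Vs' (d - i)) θ (fun i => θ' (d - i)) where
  decompV := h.decompV
  decompV' := h.decompV'.reflect
  eig := h.eig
  eig' i := h.eig' (d - i)
  theta_inj := h.theta_inj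
  theta'_inj i j h₁ h₂ h₃ h₄ hij := by
    have := h.theta'_inj _ _ (by omega) (by omega) (by omega) (by omega) hij
    omega
  trid := h.trid
  trid' i := by
    have := h.trid' (d - i)
    rw [show (d : ℤ) - i - 1 = d - (i + 1) by ring, show (d : ℤ) - i + 1 = d - (i - 1) by ring]
      at this
    simpa only [sup_comm, sup_left_comm] using this
  irred := h.irred

lemma smul_inv (h : IsTridiagonalPair A A' d Vs Vs' θ θ') {a a' : K} (ha : a ≠ 0)
    (ha' : a' ≠ 0) {φ φ' : ℤ → K} (hφ : ∀ i, 0 ≤ i → i ≤ (d : ℤ) → θ i = a * φ i)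
    (hφ' : ∀ i, 0 ≤ i → i ≤ (d : ℤ) → θ' i = a' * φ' i) :
    IsTridiagonalPair (a⁻¹ • A) (a'⁻¹ • A') d Vs Vs' φ φ' where
  decompV := h.decompV
  decompV' := h.decompV'
  eig := forall_apply_eq_of_Icc (fun _ => h.decompV.eq_bot) fun i h₁ h₂ v hv =>
    smul_inv_apply_eq ha (by rw [h.eig i v hv, hφ i h₁ h₂])
  eig' := forall_apply_eq_of_Icc (fun _ => h.decompV'.eq_bot) fun i h₁ h₂ v hv =>
    smul_inv_apply_eq ha' (by rw [h.eig' i v hv, hφ' i h₁ h₂])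
  theta_inj i j h₁ h₂ h₃ h₄ hij := h.theta_inj i j h₁ h₂ h₃ h₄ (by rw [hφ i h₁ h₂, hφ j h₃ h₄, hij])
  theta'_inj i j h₁ h₂ h₃ h₄ hij :=
    h.theta'_inj i j h₁ h₂ h₃ h₄ (by rw [hφ' i h₁ h₂, hφ' j h₃ h₄, hij])
  trid i := by rw [Submodule.map_smul _ _ _ (inv_ne_zero ha')]; exact h.trid i
  trid' i := by rw [Submodule.map_smul _ _ _ (inv_ne_zero ha)]; exact h.trid' i
  irred W h₁ h₂ := h.irred W (by rwa [Submodule.map_smul _ _ _ (inv_ne_zero ha)] at h₁)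
    (by rwa [Submodule.map_smul _ _ _ (inv_ne_zero ha')] at h₂)

lemma snd_apply_mem (h : IsTridiagonalPair A A' d Vs Vs' θ θ') {i : ℤ} {v : V} (hv : v ∈ Vs i) :
    A' v ∈ sumIcc Vs (i - 1) (i + 1) :=
  sup_le (sup_le (le_sumIcc Vs le_rfl (by omega)) (le_sumIcc Vs (by omega) (by omega)))
    (le_sumIcc Vs (by omega) le_rfl) (h.trid i (Submodule.mem_map_of_mem hv))

lemma fst_apply_mem (h : IsTridiagonalPair A A' d Vs Vs' θ θ') {i : ℤ} {v : V} (hv : v ∈ Vs' i) :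
    A v ∈ sumIcc Vs' (i - 1) (i + 1) :=
  sup_le (sup_le (le_sumIcc Vs' le_rfl (by omega)) (le_sumIcc Vs' (by omega) (by omega)))
    (le_sumIcc Vs' (by omega) le_rfl) (h.trid' i (Submodule.mem_map_of_mem hv))

lemma raise_mem (h : IsTridiagonalPair A A' d Vs Vs' θ θ') {n p : ℤ} {v : V}
    (hv : v ∈ sumIcc Vs' 0 n ⊓ sumIcc Vs p d) :
    A v - θ p • v ∈ sumIcc Vs' 0 (n + 1) ⊓ sumIcc Vs (p + 1) d := by
  refine ⟨sub_mem ?_ (Submodule.smul_mem _ _ (sumIcc_mono Vs' le_rfl (by omega) hv.1)),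
    sub_smul_mem_sumIcc_succ h.eig hv.2⟩
  rw [← h.decompV'.sumIcc_of_nonpos (m := -1) (by omega)]
  exact apply_mem_sumIcc (fun j _ _ x hx => sumIcc_mono Vs' (by omega) (by omega)
    (h.fst_apply_mem hx)) hv.1

lemma lower_mem (h : IsTridiagonalPair A A' d Vs Vs' θ θ') {n p : ℤ} {v : V}
    (hv : v ∈ sumIcc Vs' 0 n ⊓ sumIcc Vs p d) :
    A' v - θ' n • v ∈ sumIcc Vs' 0 (n - 1) ⊓ sumIcc Vs (p - 1) d := by
  refine ⟨sub_smul_mem_sumIcc_pred h.eig' hv.1,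
    sub_mem ?_ (Submodule.smul_mem _ _ (sumIcc_mono Vs (by omega) le_rfl hv.2))⟩
  rw [← h.decompV.sumIcc_of_le (n := d + 1) (by omega)]
  exact apply_mem_sumIcc (fun j _ _ x hx => sumIcc_mono Vs (by omega) (by omega)
    (h.snd_apply_mem hx)) hv.2

lemma iSup_eq_bot_or_eq_top (h : IsTridiagonalPair A A' d Vs Vs' θ θ') {F : ℤ → Submodule K V}
    {α β : ℤ → K} (hA : ∀ j, ∀ v ∈ F j, A v - α j • v ∈ F (j + 1))
    (hA' : ∀ j, ∀ v ∈ F j, A' v - β j • v ∈ F (j - 1)) :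
    ⨆ j, F j = ⊥ ∨ ⨆ j, F j = ⊤ := by
  have key : ∀ (T : Module.End K V) (γ : ℤ → K) (σ : ℤ → ℤ),
      (∀ j, ∀ v ∈ F j, T v - γ j • v ∈ F (σ j)) → (⨆ j, F j).map T ≤ ⨆ j, F j :=
    fun T γ σ hT => Submodule.map_le_iff_le_comap.2 <| iSup_le fun j v hv => by
      rw [Submodule.mem_comap, ← sub_add_cancel (T v) (γ j • v)]
      exact add_mem (Submodule.mem_iSup_of_mem _ (hT j v hv))
        (Submodule.mem_iSup_of_mem j (Submodule.smul_mem _ _ hv))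
  exact h.irred _ (key A α _ hA) (key A' β _ hA')

/-- The sum over `i` of these intersections is invariant under `A` and `A*` and lies in
`V_1 + ⋯ + V_d ≠ V`. -/
lemma inf_sumIcc_succ_eq_bot (h : IsTridiagonalPair A A' d Vs Vs' θ θ') (i : ℤ) :
    sumIcc Vs' 0 i ⊓ sumIcc Vs (i + 1) d = ⊥ := by
  let F : ℤ → Submodule K V := fun j => sumIcc Vs' 0 j ⊓ sumIcc Vs (j + 1) d
  have hF : ⨆ j, F j ≤ sumIcc Vs 1 d := iSup_le fun j => by
    rcases lt_or_ge j 0 with hj | hj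
    · simp [F, sumIcc_eq_bot Vs' hj]
    · exact inf_le_right.trans (sumIcc_mono Vs (by omega) le_rfl)
  have hA : ∀ j, ∀ v ∈ F j, A v - θ (j + 1) • v ∈ F (j + 1) := fun j v hv => h.raise_mem hv
  have hA' : ∀ j, ∀ v ∈ F j, A' v - θ' j • v ∈ F (j - 1) := fun j v hv => by
    simpa [F, sub_add_cancel] using h.lower_mem hv
  rcases h.iSup_eq_bot_or_eq_top hA hA' with hbot | htop
  · exact le_bot_iff.1 (hbot ▸ le_iSup F i)
  · exact absurd (top_le_iff.1 (htop ▸ hF)) (h.decompV.sumIcc_ne_top one_pos)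

lemma iSup_dec0sD_eq_top (h : IsTridiagonalPair A A' d Vs Vs' θ θ') :
    ⨆ i, dec0sD d Vs Vs' i = ⊤ := by
  have hA : ∀ j, ∀ v ∈ dec0sD d Vs Vs' j, A v - θ j • v ∈ dec0sD d Vs Vs' (j + 1) :=
    fun j v hv => h.raise_mem hv
  have hA' : ∀ j, ∀ v ∈ dec0sD d Vs Vs' j, A' v - θ' j • v ∈ dec0sD d Vs Vs' (j - 1) :=
    fun j v hv => h.lower_mem hv
  refine (h.iSup_eq_bot_or_eq_top hA hA').resolve_left fun hbot =>
    h.decompV'.ne_bot 0 le_rfl (Int.natCast_nonneg d) (le_bot_iff.1 ?_)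
  rw [← hbot]
  refine le_iSup_of_le 0 ?_
  rw [dec0sD, sumIcc_self, h.decompV.sumIcc_eq_top, inf_top_eq]

lemma sumIcc_dec0sD_eq_top (h : IsTridiagonalPair A A' d Vs Vs' θ θ') :
    sumIcc (dec0sD d Vs Vs') 0 d = ⊤ :=
  (sumIcc_eq_iSup fun _ => dec0sD_eq_bot d Vs Vs').trans h.iSup_dec0sD_eq_top

lemma sumIcc_fst_eq (h : IsTridiagonalPair A A' d Vs Vs' θ θ') (m : ℤ) :
    sumIcc Vs m d = sumIcc (dec0sD d Vs Vs') m d := by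
  set U := dec0sD d Vs Vs'
  have hle : sumIcc U m d ≤ sumIcc Vs m d :=
    sumIcc_le fun j hj _ => inf_le_right.trans (sumIcc_mono Vs hj le_rfl)
  have htop : sumIcc U 0 (m - 1) ⊔ sumIcc U m d = ⊤ :=
    eq_top_iff.2 (h.sumIcc_dec0sD_eq_top.ge.trans (by simpa using sumIcc_le_sup U 0 (m - 1) d))
  refine le_antisymm ?_ hle
  calc sumIcc Vs m d
      = sumIcc Vs m d ⊓ sumIcc U 0 (m - 1) ⊔ sumIcc U m d := by
        rw [inf_sup_assoc_of_le _ hle, htop, inf_top_eq]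
    _ ≤ sumIcc Vs m d ⊓ sumIcc Vs' 0 (m - 1) ⊔ sumIcc U m d := by
        gcongr
        exact sumIcc_le fun j _ hj => inf_le_left.trans (sumIcc_mono Vs' le_rfl hj)
    _ = sumIcc U m d := by
        have hbot := h.inf_sumIcc_succ_eq_bot (m - 1)
        rw [sub_add_cancel] at hbot
        rw [inf_comm, hbot, bot_sup_eq]

lemma inf_sumIcc_eq_sumIcc_dec0sD (h : IsTridiagonalPair A A' d Vs Vs' θ θ') (m n : ℤ) :
    sumIcc Vs' 0 n ⊓ sumIcc Vs m d = sumIcc (dec0sD d Vs Vs') m n := by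
  set U := dec0sD d Vs Vs'
  have hle : sumIcc U m n ≤ sumIcc Vs' 0 n :=
    sumIcc_le fun j _ hj => inf_le_left.trans (sumIcc_mono Vs' le_rfl hj)
  refine le_antisymm ?_ (le_inf hle
    (sumIcc_le fun j hj _ => inf_le_right.trans (sumIcc_mono Vs hj le_rfl)))
  calc sumIcc Vs' 0 n ⊓ sumIcc Vs m d
      ≤ (sumIcc U m n ⊔ sumIcc U (n + 1) d) ⊓ sumIcc Vs' 0 n := by
        rw [h.sumIcc_fst_eq, inf_comm]
        exact inf_le_inf_right _ (sumIcc_le_sup U m n d)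
    _ = sumIcc U m n ⊔ sumIcc U (n + 1) d ⊓ sumIcc Vs' 0 n := sup_inf_assoc_of_le _ hle
    _ ≤ sumIcc U m n ⊔ sumIcc Vs (n + 1) d ⊓ sumIcc Vs' 0 n := by
        gcongr
        exact sumIcc_le fun j hj _ => inf_le_right.trans (sumIcc_mono Vs hj le_rfl)
    _ = sumIcc U m n := by rw [inf_comm, h.inf_sumIcc_succ_eq_bot, sup_bot_eq]

lemma sumIcc_snd_eq (h : IsTridiagonalPair A A' d Vs Vs' θ θ') (n : ℤ) :
    sumIcc Vs' 0 n = sumIcc (dec0sD d Vs Vs') 0 n := by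
  rw [← h.inf_sumIcc_eq_sumIcc_dec0sD, h.decompV.sumIcc_eq_top, inf_top_eq]

lemma raise_mem_dec0s0 (h : IsTridiagonalPair A A' d Vs Vs' θ θ') {i : ℤ} {v : V}
    (hv : v ∈ dec0s0 d Vs Vs' i) : A v - θ (d - i) • v ∈ dec0s0 d Vs Vs' (i + 1) := by
  rw [dec0s0_eq_dec0sD] at hv ⊢
  exact h.reverse_fst.raise_mem hv

lemma lower_mem_dec0s0 (h : IsTridiagonalPair A A' d Vs Vs' θ θ') {i : ℤ} {v : V}
    (hv : v ∈ dec0s0 d Vs Vs' i) : A' v - θ' i • v ∈ dec0s0 d Vs Vs' (i - 1) := by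
  rw [dec0s0_eq_dec0sD] at hv ⊢
  exact h.reverse_fst.lower_mem hv

lemma raise_mem_decDsD (h : IsTridiagonalPair A A' d Vs Vs' θ θ') {i : ℤ} {v : V}
    (hv : v ∈ decDsD d Vs Vs' i) : A v - θ i • v ∈ decDsD d Vs Vs' (i + 1) := by
  rw [decDsD_eq_dec0sD] at hv ⊢
  exact h.reverse_snd.raise_mem hv

lemma lower_mem_decDsD (h : IsTridiagonalPair A A' d Vs Vs' θ θ') {i : ℤ} {v : V}
    (hv : v ∈ decDsD d Vs Vs' i) : A' v - θ' (d - i) • v ∈ decDsD d Vs Vs' (i - 1) := by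
  rw [decDsD_eq_dec0sD] at hv ⊢
  exact h.reverse_snd.lower_mem hv

lemma iSup_dec0s0_eq_top (h : IsTridiagonalPair A A' d Vs Vs' θ θ') :
    ⨆ i, dec0s0 d Vs Vs' i = ⊤ := by
  rw [dec0s0_eq_dec0sD]
  exact h.reverse_fst.iSup_dec0sD_eq_top

lemma iSup_decDsD_eq_top (h : IsTridiagonalPair A A' d Vs Vs' θ θ') :
    ⨆ i, decDsD d Vs Vs' i = ⊤ := by
  rw [decDsD_eq_dec0sD]
  exact h.reverse_snd.iSup_dec0sD_eq_top

lemma inf_sumIcc_eq_sumIcc_dec0s0 (h : IsTridiagonalPair A A' d Vs Vs' θ θ') (m n : ℤ) :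
    sumIcc Vs' 0 n ⊓ sumIcc Vs 0 (d - m) = sumIcc (dec0s0 d Vs Vs') m n := by
  rw [dec0s0_eq_dec0sD, ← h.reverse_fst.inf_sumIcc_eq_sumIcc_dec0sD, sumIcc_reflect, sub_self]

lemma inf_sumIcc_eq_sumIcc_decDsD (h : IsTridiagonalPair A A' d Vs Vs' θ θ') (m n : ℤ) :
    sumIcc Vs' (d - n) d ⊓ sumIcc Vs m d = sumIcc (decDsD d Vs Vs') m n := by
  rw [decDsD_eq_dec0sD, ← h.reverse_snd.inf_sumIcc_eq_sumIcc_dec0sD, sumIcc_reflect, sub_zero]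

end IsTridiagonalPair

section QRelations

variable {q : K} {ι : Type*} {P Q : Module.End K V}

def QRel (q : K) (P Q : Module.End K V) : Prop :=
  q • (P * Q) - q⁻¹ • (Q * P) = (q - q⁻¹) • 1

def QSerre (q : K) (X Y : Module.End K V) : Prop :=
  X ^ 3 * Y - qInt q 3 • (X ^ 2 * Y * X) + qInt q 3 • (X * Y * X ^ 2) - Y * X ^ 3 = 0

lemma qRel_inv_iff : QRel q⁻¹ P Q ↔ QRel q Q P := by
  rw [QRel, QRel, inv_inv, ← neg_inj, neg_sub, ← neg_smul, neg_sub]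

lemma QRel.smul_eq_one (hqq : q - q⁻¹ ≠ 0) (h : QRel q P Q) :
    (q - q⁻¹)⁻¹ • (q • (P * Q) - q⁻¹ • (Q * P)) = 1 := by
  rw [h, smul_smul, inv_mul_cancel₀ hqq, one_smul]

lemma QRel.apply (h : QRel q P Q) (x : V) : q • P (Q x) - q⁻¹ • Q (P x) = (q - q⁻¹) • x := by
  simpa using LinearMap.congr_fun h x

lemma qRel_of_eigen_of_sub_smul_mem (hq0 : q ≠ 0) {U : ι → Submodule K V} (hU : ⨆ i, U i = ⊤)
    {ξ η : ι → K} {σ : ι → ι} (hP : ∀ i, ∀ v ∈ U i, P v = ξ i • v)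
    (hQ : ∀ i, ∀ v ∈ U i, Q v - η i • v ∈ U (σ i)) (hξη : ∀ i, ξ i * η i = 1)
    (hξσ : ∀ i, ξ i = q ^ 2 * ξ (σ i)) : QRel q P Q := by
  refine LinearMap.ext_of_iSup_eq_top hU fun i v hv => ?_
  obtain ⟨u, hu, hQv⟩ : ∃ u ∈ U (σ i), Q v = η i • v + u := ⟨_, hQ i v hv, by abel⟩
  simp only [LinearMap.sub_apply, LinearMap.smul_apply, Module.End.mul_apply,
    Module.End.one_apply]
  rw [hP i v hv, map_smul, hQv, map_add, map_smul, hP i v hv, hP _ u hu]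
  match_scalars
  · linear_combination (q - q⁻¹) * hξη i
  · linear_combination (-q⁻¹) * hξσ i - q * ξ (σ i) * mul_inv_cancel₀ hq0

lemma qRel_swap_of_eigen_of_sub_smul_mem (hq0 : q ≠ 0) {U : ι → Submodule K V}
    (hU : ⨆ i, U i = ⊤) {ξ η : ι → K} {σ : ι → ι} (hP : ∀ i, ∀ v ∈ U i, P v = ξ i • v)
    (hQ : ∀ i, ∀ v ∈ U i, Q v - η i • v ∈ U (σ i)) (hξη : ∀ i, ξ i * η i = 1)
    (hξσ : ∀ i, ξ (σ i) = q ^ 2 * ξ i) : QRel q Q P :=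
  qRel_inv_iff.1 <| qRel_of_eigen_of_sub_smul_mem (inv_ne_zero hq0) hU hP hQ hξη fun i => by
    rw [hξσ, inv_pow, inv_mul_cancel_left₀ (pow_ne_zero 2 hq0)]

lemma qSerre_of_eigen (hq0 : q ≠ 0) (hqq : q - q⁻¹ ≠ 0) {U : ℤ → Submodule K V}
    (hU : ⨆ i, U i = ⊤) {X Y : Module.End K V} {ξ : ℤ → K}
    (hX : ∀ i, ∀ v ∈ U i, X v = ξ i • v) (hY : ∀ i, ∀ v ∈ U i, Y v ∈ sumIcc U (i - 1) (i + 1))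
    (hξ : ∀ i, ξ (i + 1) = q ^ 2 * ξ i ∨ ξ i = q ^ 2 * ξ (i + 1)) : QSerre q X Y := by
  have hXpow : ∀ j, ∀ x ∈ U j, ∀ n : ℕ, (X ^ n) x = ξ j ^ n • x := fun j x hx n => by
    induction n with
    | zero => simp
    | succ n ih =>
      rw [pow_succ', Module.End.mul_apply, ih, map_smul, hX j x hx, smul_smul, ← pow_succ]
  refine LinearMap.ext_of_iSup_eq_top hU fun i v hv => ?_
  set c := qInt q 3
  let p : Module.End K V := X ^ 3 - (c * ξ i) • X ^ 2 + (c * ξ i ^ 2) • X - ξ i ^ 3 • 1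
  have hp : sumIcc U (i - 1) (i + 1) ≤ LinearMap.ker p := sumIcc_le fun j h₁ h₂ x hx => by
    have hcubic : ξ j ^ 3 - c * ξ i * ξ j ^ 2 + c * ξ i ^ 2 * ξ j - ξ i ^ 3 = 0 := by
      refine serre_cubic_eq_zero hq0 hqq ?_
      obtain rfl | rfl | rfl : j = i - 1 ∨ j = i ∨ j = i + 1 := by omega
      · have := hξ (i - 1)
        rw [sub_add_cancel] at this
        tauto
      · exact Or.inl rfl
      · exact Or.inr (hξ i)
    rw [LinearMap.mem_ker]
    simp only [p, LinearMap.sub_apply, LinearMap.add_apply, LinearMap.smul_apply,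
      Module.End.one_apply, hXpow j x hx, hX j x hx]
    match_scalars
    linear_combination hcubic
  have hserre :
      (X ^ 3 * Y - c • (X ^ 2 * Y * X) + c • (X * Y * X ^ 2) - Y * X ^ 3) v = p (Y v) := by
    simp only [p, LinearMap.sub_apply, LinearMap.add_apply, LinearMap.smul_apply,
      Module.End.mul_apply, Module.End.one_apply, hXpow i v hv, hX i v hv, map_smul]
    module
  exact hserre.trans (hp (hY i v hv))

end QRelations

namespace IsDecomposition

variable {q : K} {d : ℕ} {U : ℤ → Submodule K V} {P Q : Module.End K V} {ξ : ℤ → K}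

lemma apply_mem_sumIcc_of_qRel (hq0 : q ≠ 0) (hU : IsDecomposition d U)
    (hQ : ∀ i, ∀ v ∈ U i, Q v = ξ i • v) (h : QRel q P Q) {j m n : ℤ} (hj : m ≤ j ∧ j ≤ n)
    (hξ : ∀ i, 0 ≤ i → i ≤ (d : ℤ) → ξ i = q ^ 2 * ξ j → m ≤ i ∧ i ≤ n) {x : V}
    (hx : x ∈ U j) : P x ∈ sumIcc U m n := by
  refine hU.mem_sumIcc_of_sub_smul_mem hQ hξ ?_
  have hrel := h.apply x
  rw [hQ j x hx, map_smul] at hrel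
  have hPx : Q (P x) - (q ^ 2 * ξ j) • P x = (-(q * (q - q⁻¹))) • x := by
    rw [neg_smul, mul_smul q, ← hrel]
    match_scalars <;> field_simp
  rw [hPx]
  exact Submodule.smul_mem _ _ (le_sumIcc U hj.1 hj.2 hx)

lemma apply_mem_sumIcc_succ_of_qRel (hq0 : q ≠ 0) (hU : IsDecomposition d U)
    (hQ : ∀ i, ∀ v ∈ U i, Q v = ξ i • v) (h : QRel q P Q)
    (hξ : ∀ i j, ξ i = q ^ 2 * ξ j → i = j + 1) {m n : ℤ} {v : V} (hv : v ∈ sumIcc U m n) :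
    P v ∈ sumIcc U m (n + 1) :=
  apply_mem_sumIcc (fun j h₁ h₂ x hx => sumIcc_mono U h₁ (by omega)
    (hU.apply_mem_sumIcc_of_qRel hq0 hQ h (m := j) (n := j + 1) (by omega)
      (fun i _ _ hi => by have := hξ i j hi; omega) hx)) hv

lemma apply_mem_sumIcc_pred_of_qRel (hq0 : q ≠ 0) (hU : IsDecomposition d U)
    (hQ : ∀ i, ∀ v ∈ U i, Q v = ξ i • v) (h : QRel q P Q)
    (hξ : ∀ i j, ξ i = q ^ 2 * ξ j → i = j - 1) {m n : ℤ} {v : V} (hv : v ∈ sumIcc U m n) :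
    P v ∈ sumIcc U (m - 1) n :=
  apply_mem_sumIcc (fun j h₁ h₂ x hx => sumIcc_mono U (by omega) h₂
    (hU.apply_mem_sumIcc_of_qRel hq0 hQ h (m := j - 1) (n := j) (by omega)
      (fun i _ _ hi => by have := hξ i j hi; omega) hx)) hv

end IsDecomposition

def IsQGeometricPair (q : K) (A A' : Module.End K V) (d : ℕ) (Vs Vs' : ℤ → Submodule K V) :
    Prop :=
  IsTridiagonalPair A A' d Vs Vs' (fun i => q ^ (2 * i - (d : ℤ))) (fun i => q ^ ((d : ℤ) - 2 * i))

namespace IsQGeometricPair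

variable {q : K} {A A' B B' Kop Kinv P : Module.End K V} {d : ℕ} {Vs Vs' : ℤ → Submodule K V}

section Flags

variable (hq0 : q ≠ 0) (hq : Function.Injective (q ^ · : ℤ → K))
  (h : IsQGeometricPair q A A' d Vs Vs') {m n : ℤ} {v : V}
include hq0 hq h

lemma apply_mem_sumIcc_fst_succ (hP : QRel q P A) (hv : v ∈ sumIcc Vs m n) :
    P v ∈ sumIcc Vs m (n + 1) :=
  h.decompV.apply_mem_sumIcc_succ_of_qRel hq0 h.eig hP
    (fun _ _ hij => by have := eq_add_two_of_zpow_eq hq0 hq hij; omega) hv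

lemma apply_mem_sumIcc_fst_pred (hP : QRel q⁻¹ P A) (hv : v ∈ sumIcc Vs m n) :
    P v ∈ sumIcc Vs (m - 1) n :=
  h.decompV.apply_mem_sumIcc_pred_of_qRel (inv_ne_zero hq0) h.eig hP
    (fun _ _ hij => by have := eq_sub_two_of_zpow_eq hq0 hq hij; omega) hv

lemma apply_mem_sumIcc_snd_succ (hP : QRel q⁻¹ P A') (hv : v ∈ sumIcc Vs' m n) :
    P v ∈ sumIcc Vs' m (n + 1) :=
  h.decompV'.apply_mem_sumIcc_succ_of_qRel (inv_ne_zero hq0) h.eig' hP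
    (fun _ _ hij => by have := eq_sub_two_of_zpow_eq hq0 hq hij; omega) hv

lemma apply_mem_sumIcc_snd_pred (hP : QRel q P A') (hv : v ∈ sumIcc Vs' m n) :
    P v ∈ sumIcc Vs' (m - 1) n :=
  h.decompV'.apply_mem_sumIcc_pred_of_qRel hq0 h.eig' hP
    (fun _ _ hij => by have := eq_add_two_of_zpow_eq hq0 hq hij; omega) hv

end Flags

section Relations

variable (hq0 : q ≠ 0) (h : IsQGeometricPair q A A' d Vs Vs')
include hq0 h

lemma qRel_K_snd (hK : ∀ i, ∀ v ∈ dec0sD d Vs Vs' i, Kop v = q ^ (2 * i - (d : ℤ)) • v) :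
    QRel q Kop A' :=
  qRel_of_eigen_of_sub_smul_mem hq0 h.iSup_dec0sD_eq_top hK (σ := fun i => i - 1)
    (fun _ _ hv => h.lower_mem hv) (fun _ => zpow_mul_zpow_eq_one hq0 (by ring))
    (fun _ => zpow_eq_sq_mul_zpow hq0 (by ring))

lemma qRel_Kinv_fst (hKinv : ∀ i, ∀ v ∈ dec0sD d Vs Vs' i, Kinv v = q ^ ((d : ℤ) - 2 * i) • v) :
    QRel q Kinv A :=
  qRel_of_eigen_of_sub_smul_mem hq0 h.iSup_dec0sD_eq_top hKinv (σ := fun i => i + 1)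
    (fun _ _ hv => h.raise_mem hv) (fun _ => zpow_mul_zpow_eq_one hq0 (by ring))
    (fun _ => zpow_eq_sq_mul_zpow hq0 (by ring))

lemma qRel_B'_fst (hB' : ∀ i, ∀ v ∈ decDsD d Vs Vs' i, B' v = q ^ ((d : ℤ) - 2 * i) • v) :
    QRel q B' A :=
  qRel_of_eigen_of_sub_smul_mem hq0 h.iSup_decDsD_eq_top hB' (σ := fun i => i + 1)
    (fun _ _ hv => h.raise_mem_decDsD hv) (fun _ => zpow_mul_zpow_eq_one hq0 (by ring))
    (fun _ => zpow_eq_sq_mul_zpow hq0 (by ring))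

lemma qRel_B_snd (hB : ∀ i, ∀ v ∈ dec0s0 d Vs Vs' i, B v = q ^ (2 * i - (d : ℤ)) • v) :
    QRel q B A' :=
  qRel_of_eigen_of_sub_smul_mem hq0 h.iSup_dec0s0_eq_top hB (σ := fun i => i - 1)
    (fun _ _ hv => h.lower_mem_dec0s0 hv) (fun _ => zpow_mul_zpow_eq_one hq0 (by ring))
    (fun _ => zpow_eq_sq_mul_zpow hq0 (by ring))

lemma qRel_snd_B' (hB' : ∀ i, ∀ v ∈ decDsD d Vs Vs' i, B' v = q ^ ((d : ℤ) - 2 * i) • v) :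
    QRel q A' B' :=
  qRel_swap_of_eigen_of_sub_smul_mem hq0 h.iSup_decDsD_eq_top hB' (σ := fun i => i - 1)
    (fun _ _ hv => h.lower_mem_decDsD hv) (fun _ => zpow_mul_zpow_eq_one hq0 (by ring))
    (fun _ => zpow_eq_sq_mul_zpow hq0 (by ring))

lemma qRel_fst_B (hB : ∀ i, ∀ v ∈ dec0s0 d Vs Vs' i, B v = q ^ (2 * i - (d : ℤ)) • v) :
    QRel q A B :=
  qRel_swap_of_eigen_of_sub_smul_mem hq0 h.iSup_dec0s0_eq_top hB (σ := fun i => i + 1)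
    (fun _ _ hv => h.raise_mem_dec0s0 hv) (fun _ => zpow_mul_zpow_eq_one hq0 (by ring))
    (fun _ => zpow_eq_sq_mul_zpow hq0 (by ring))

end Relations

section Assembly

variable (hq0 : q ≠ 0) (hq : Function.Injective (q ^ · : ℤ → K))
  (h : IsQGeometricPair q A A' d Vs Vs')
include hq0 hq h

lemma K_sub_smul_mem_decDsD
    (hK : ∀ i, ∀ v ∈ dec0sD d Vs Vs' i, Kop v = q ^ (2 * i - (d : ℤ)) • v)
    (hKA' : QRel q Kop A') {i : ℤ} {v : V} (hv : v ∈ decDsD d Vs Vs' i) :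
    Kop v - q ^ (2 * i - (d : ℤ)) • v ∈ decDsD d Vs Vs' (i + 1) := by
  refine ⟨?_, ?_⟩
  · rw [show (d : ℤ) - (i + 1) = d - i - 1 by ring]
    exact sub_mem (h.apply_mem_sumIcc_snd_pred hq0 hq hKA' hv.1)
      (Submodule.smul_mem _ _ (sumIcc_mono Vs' (by omega) le_rfl hv.1))
  · rw [h.sumIcc_fst_eq]
    exact sub_smul_mem_sumIcc_succ hK (h.sumIcc_fst_eq i ▸ hv.2)

lemma Kinv_sub_smul_mem_dec0s0
    (hKinv : ∀ i, ∀ v ∈ dec0sD d Vs Vs' i, Kinv v = q ^ ((d : ℤ) - 2 * i) • v)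
    (hKinvA : QRel q Kinv A) {i : ℤ} {v : V} (hv : v ∈ dec0s0 d Vs Vs' i) :
    Kinv v - q ^ ((d : ℤ) - 2 * i) • v ∈ dec0s0 d Vs Vs' (i - 1) := by
  refine ⟨?_, ?_⟩
  · rw [h.sumIcc_snd_eq]
    exact sub_smul_mem_sumIcc_pred hKinv (h.sumIcc_snd_eq i ▸ hv.1)
  · rw [show (d : ℤ) - (i - 1) = d - i + 1 by ring]
    exact sub_mem (h.apply_mem_sumIcc_fst_succ hq0 hq hKinvA hv.2)
      (Submodule.smul_mem _ _ (sumIcc_mono Vs le_rfl (by omega) hv.2))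

lemma qRel_B'_K (hB' : ∀ i, ∀ v ∈ decDsD d Vs Vs' i, B' v = q ^ ((d : ℤ) - 2 * i) • v)
    (hK : ∀ i, ∀ v ∈ dec0sD d Vs Vs' i, Kop v = q ^ (2 * i - (d : ℤ)) • v) :
    QRel q B' Kop :=
  qRel_of_eigen_of_sub_smul_mem hq0 h.iSup_decDsD_eq_top hB' (σ := fun i => i + 1)
    (fun _ _ hv => h.K_sub_smul_mem_decDsD hq0 hq hK (h.qRel_K_snd hq0 hK) hv)
    (fun _ => zpow_mul_zpow_eq_one hq0 (by ring)) (fun _ => zpow_eq_sq_mul_zpow hq0 (by ring))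

lemma qRel_B_Kinv (hB : ∀ i, ∀ v ∈ dec0s0 d Vs Vs' i, B v = q ^ (2 * i - (d : ℤ)) • v)
    (hKinv : ∀ i, ∀ v ∈ dec0sD d Vs Vs' i, Kinv v = q ^ ((d : ℤ) - 2 * i) • v) :
    QRel q B Kinv :=
  qRel_of_eigen_of_sub_smul_mem hq0 h.iSup_dec0s0_eq_top hB (σ := fun i => i - 1)
    (fun _ _ hv => h.Kinv_sub_smul_mem_dec0s0 hq0 hq hKinv (h.qRel_Kinv_fst hq0 hKinv) hv)
    (fun _ => zpow_mul_zpow_eq_one hq0 (by ring)) (fun _ => zpow_eq_sq_mul_zpow hq0 (by ring))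

lemma qSerre_fst_snd : QSerre q A A' :=
  qSerre_of_eigen hq0 (sub_inv_ne_zero_of_zpow_injective hq) h.decompV.sup_eq_top h.eig
    (fun _ _ hv => h.snd_apply_mem hv) (fun _ => Or.inl (zpow_eq_sq_mul_zpow hq0 (by ring)))

lemma qSerre_snd_fst : QSerre q A' A :=
  qSerre_of_eigen hq0 (sub_inv_ne_zero_of_zpow_injective hq) h.decompV'.sup_eq_top h.eig'
    (fun _ _ hv => h.fst_apply_mem hv) (fun _ => Or.inr (zpow_eq_sq_mul_zpow hq0 (by ring)))

lemma qSerre_B_B' (hB : ∀ i, ∀ v ∈ dec0s0 d Vs Vs' i, B v = q ^ (2 * i - (d : ℤ)) • v)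
    (hB' : ∀ i, ∀ v ∈ decDsD d Vs Vs' i, B' v = q ^ ((d : ℤ) - 2 * i) • v) :
    QSerre q B B' := by
  refine qSerre_of_eigen hq0 (sub_inv_ne_zero_of_zpow_injective hq) h.iSup_dec0s0_eq_top hB
    (fun i v hv => ?_) (fun _ => Or.inl (zpow_eq_sq_mul_zpow hq0 (by ring)))
  rw [← h.inf_sumIcc_eq_sumIcc_dec0s0, show (d : ℤ) - (i - 1) = d - i + 1 by ring]
  exact ⟨h.apply_mem_sumIcc_snd_succ hq0 hq (qRel_inv_iff.2 (h.qRel_snd_B' hq0 hB')) hv.1,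
    h.apply_mem_sumIcc_fst_succ hq0 hq (h.qRel_B'_fst hq0 hB') hv.2⟩

lemma qSerre_B'_B (hB : ∀ i, ∀ v ∈ dec0s0 d Vs Vs' i, B v = q ^ (2 * i - (d : ℤ)) • v)
    (hB' : ∀ i, ∀ v ∈ decDsD d Vs Vs' i, B' v = q ^ ((d : ℤ) - 2 * i) • v) :
    QSerre q B' B := by
  refine qSerre_of_eigen hq0 (sub_inv_ne_zero_of_zpow_injective hq) h.iSup_decDsD_eq_top hB'
    (fun i v hv => ?_) (fun _ => Or.inr (zpow_eq_sq_mul_zpow hq0 (by ring)))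
  rw [← h.inf_sumIcc_eq_sumIcc_decDsD, show (d : ℤ) - (i + 1) = d - i - 1 by ring]
  exact ⟨h.apply_mem_sumIcc_snd_pred hq0 hq (h.qRel_B_snd hq0 hB) hv.1,
    h.apply_mem_sumIcc_fst_pred hq0 hq (qRel_inv_iff.2 (h.qRel_fst_B hq0 hB)) hv.2⟩

theorem alternateRelations
    (hB : ∀ i, ∀ v ∈ dec0s0 d Vs Vs' i, B v = q ^ (2 * i - (d : ℤ)) • v)
    (hB' : ∀ i, ∀ v ∈ decDsD d Vs Vs' i, B' v = q ^ ((d : ℤ) - 2 * i) • v)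
    (hK : ∀ i, ∀ v ∈ dec0sD d Vs Vs' i, Kop v = q ^ (2 * i - (d : ℤ)) • v)
    (hKKinv : Kop * Kinv = 1) (hKinvK : Kinv * Kop = 1) :
    AlternateRelations q ![B', B] ![A', A] ![Kop, Kinv] ![Kinv, Kop] := by
  have hqq := sub_inv_ne_zero_of_zpow_injective hq
  have hKinv : ∀ i, ∀ v ∈ dec0sD d Vs Vs' i, Kinv v = q ^ ((d : ℤ) - 2 * i) • v :=
    fun i v hv => by
      rw [apply_eq_inv_smul_of_mul_eq_one hKinvK (zpow_ne_zero _ hq0) (hK i v hv), ← zpow_neg,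
        neg_sub]
  have hcentral : ∀ T : Module.End K V, Kop * Kinv * T = T * (Kop * Kinv) := by
    simp [hKKinv]
  refine
    { k_kinv := Fin.forall_fin_two.2 ⟨hKKinv, hKinvK⟩
      kinv_k := Fin.forall_fin_two.2 ⟨hKinvK, hKKinv⟩
      central_yp := fun _ => hcentral _
      central_ym := fun _ => hcentral _
      central_k := fun _ => hcentral _
      central_kinv := fun _ => hcentral _
      rel_yp_k := Fin.forall_fin_two.2 ⟨(h.qRel_B'_K hq0 hq hB' hK).smul_eq_one hqq,
        (h.qRel_B_Kinv hq0 hq hB hKinv).smul_eq_one hqq⟩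
      rel_k_ym := Fin.forall_fin_two.2 ⟨(h.qRel_K_snd hq0 hK).smul_eq_one hqq,
        (h.qRel_Kinv_fst hq0 hKinv).smul_eq_one hqq⟩
      rel_ym_yp := Fin.forall_fin_two.2 ⟨(h.qRel_snd_B' hq0 hB').smul_eq_one hqq,
        (h.qRel_fst_B hq0 hB).smul_eq_one hqq⟩
      rel_yp_ym := ?_
      serre_p := ?_
      serre_m := ?_ } <;> simp only [Fin.forall_fin_two, ne_eq, not_true_eq_false,
        IsEmpty.forall_iff, true_and, and_true]
  · simp only [Matrix.cons_val_zero, Matrix.cons_val_one, hKinvK]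
    exact ⟨fun _ => (h.qRel_B'_fst hq0 hB').smul_eq_one hqq,
      fun _ => (h.qRel_B_snd hq0 hB).smul_eq_one hqq⟩
  · exact ⟨fun _ => h.qSerre_B'_B hq0 hq hB hB', fun _ => h.qSerre_B_B' hq0 hq hB hB'⟩
  · exact ⟨fun _ => h.qSerre_snd_fst hq0 hq, fun _ => h.qSerre_fst_snd hq0 hq⟩

end Assembly

end IsQGeometricPair

theorem stmt13_general {K : Type*} [Field K]
    {V : Type*} [AddCommGroup V] [Module K V]
    (q : K) (hq0 : q ≠ 0) (hq : ∀ n : ℕ, 0 < n → q ^ n ≠ 1)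
    (A A' : Module.End K V) (d : ℕ) (Vs Vs' : ℤ → Submodule K V) (θ θ' : ℤ → K)
    (hTD : IsTridiagonalPair A A' d Vs Vs' θ θ')
    (a a' : K) (ha : a ≠ 0) (ha' : a' ≠ 0)
    (hθ : ∀ i : ℤ, 0 ≤ i → i ≤ (d : ℤ) → θ i = a * q ^ (2 * i - (d : ℤ)))
    (hθ' : ∀ i : ℤ, 0 ≤ i → i ≤ (d : ℤ) → θ' i = a' * q ^ ((d : ℤ) - 2 * i))
    (b b' : K) (hb : b ≠ 0) (hb' : b' ≠ 0)
    (B : Module.End K V)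
    (hB : ∀ i : ℤ, 0 ≤ i → i ≤ (d : ℤ) → ∀ v ∈ dec0s0 d Vs Vs' i,
      B v = (b * q ^ (2 * i - (d : ℤ))) • v)
    (B' : Module.End K V)
    (hB' : ∀ i : ℤ, 0 ≤ i → i ≤ (d : ℤ) → ∀ v ∈ decDsD d Vs Vs' i,
      B' v = (b' * q ^ ((d : ℤ) - 2 * i)) • v)
    (Kop : Module.End K V)
    (hKop : ∀ i : ℤ, 0 ≤ i → i ≤ (d : ℤ) → ∀ v ∈ dec0sD d Vs Vs' i,
      Kop v = (q ^ (2 * i - (d : ℤ))) • v)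
    (Kinv : Module.End K V)
    (hKinv1 : Kop * Kinv = 1) (hKinv2 : Kinv * Kop = 1)
    :
    AlternateRelations q ![b'⁻¹ • B', b⁻¹ • B] ![a'⁻¹ • A', a⁻¹ • A] ![Kop, Kinv] ![Kinv, Kop] ∧
    (∀ W : Submodule K V,
      Submodule.map (b'⁻¹ • B') W ≤ W → Submodule.map (b⁻¹ • B) W ≤ W →
      Submodule.map (a'⁻¹ • A') W ≤ W → Submodule.map (a⁻¹ • A) W ≤ W →
      Submodule.map Kop W ≤ W → Submodule.map Kinv W ≤ W →
      W = ⊥ ∨ W = ⊤) := by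
  have hqinj := zpow_injective_of_pow_ne_one hq0 hq
  have hTD' : IsQGeometricPair q (a⁻¹ • A) (a'⁻¹ • A') d Vs Vs' := hTD.smul_inv ha ha' hθ hθ'
  have hY := forall_apply_eq_of_Icc (fun _ => dec0s0_eq_bot d Vs Vs')
    fun i h₁ h₂ v hv => smul_inv_apply_eq hb (hB i h₁ h₂ v hv)
  have hY' := forall_apply_eq_of_Icc (fun _ => decDsD_eq_bot d Vs Vs')
    fun i h₁ h₂ v hv => smul_inv_apply_eq hb' (hB' i h₁ h₂ v hv)
  have hK := forall_apply_eq_of_Icc (fun _ => dec0sD_eq_bot d Vs Vs') hKop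
  exact ⟨hTD'.alternateRelations hq0 hqinj hY hY' hK hKinv1 hKinv2,
    fun W _ _ hA' hA _ _ => hTD'.irred W hA hA'⟩

/-- the assignment `y₀⁺ = b*⁻¹B*, y₁⁺ = b⁻¹B, y₀⁻ = a*⁻¹A*, y₁⁻ = a⁻¹A,
k₀ = K, k₁ = K⁻¹` satisfies the alternate relations and is irreducible. -/
theorem stmt13 {K : Type*} [Field K] [IsAlgClosed K]
    {V : Type*} [AddCommGroup V] [Module K V] [FiniteDimensional K V] [Nontrivial V]
    (q : K) (hq0 : q ≠ 0) (hq : ∀ n : ℕ, 0 < n → q ^ n ≠ 1)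
    (A A' : Module.End K V) (d : ℕ) (Vs Vs' : ℤ → Submodule K V) (θ θ' : ℤ → K)
    (hTD : IsTridiagonalPair A A' d Vs Vs' θ θ')
    (a a' : K) (ha : a ≠ 0) (ha' : a' ≠ 0)
    (hθ : ∀ i : ℤ, 0 ≤ i → i ≤ (d : ℤ) → θ i = a * q ^ (2 * i - (d : ℤ)))
    (hθ' : ∀ i : ℤ, 0 ≤ i → i ≤ (d : ℤ) → θ' i = a' * q ^ ((d : ℤ) - 2 * i))
    (b b' : K) (hb : b ≠ 0) (hb' : b' ≠ 0)
    (B : Module.End K V)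
    (hB : ∀ i : ℤ, 0 ≤ i → i ≤ (d : ℤ) → ∀ v ∈ dec0s0 d Vs Vs' i,
      B v = (b * q ^ (2 * i - (d : ℤ))) • v)
    (B' : Module.End K V)
    (hB' : ∀ i : ℤ, 0 ≤ i → i ≤ (d : ℤ) → ∀ v ∈ decDsD d Vs Vs' i,
      B' v = (b' * q ^ ((d : ℤ) - 2 * i)) • v)
    (Kop : Module.End K V)
    (hKop : ∀ i : ℤ, 0 ≤ i → i ≤ (d : ℤ) → ∀ v ∈ dec0sD d Vs Vs' i,
      Kop v = (q ^ (2 * i - (d : ℤ))) • v)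
    (Kinv : Module.End K V)
    (hKinv1 : Kop * Kinv = 1) (hKinv2 : Kinv * Kop = 1)
    :
    AlternateRelations q ![b'⁻¹ • B', b⁻¹ • B] ![a'⁻¹ • A', a⁻¹ • A] ![Kop, Kinv] ![Kinv, Kop] ∧
    (∀ W : Submodule K V,
      Submodule.map (b'⁻¹ • B') W ≤ W → Submodule.map (b⁻¹ • B) W ≤ W →
      Submodule.map (a'⁻¹ • A') W ≤ W → Submodule.map (a⁻¹ • A) W ≤ W →
      Submodule.map Kop W ≤ W → Submodule.map Kinv W ≤ W →
      W = ⊥ ∨ W = ⊤) :=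
  stmt13_general q hq0 hq A A' d Vs Vs' θ θ' hTD a a' ha ha' hθ hθ' b b' hb hb' B hB B' hB' Kop hKop
    Kinv hKinv1 hKinv2
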